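/- Let G be a connected subgraph of Q_n and let a, b be distinct vertices of G. Then the vertex set of G can be partitioned into two sets inducing connected subgraphs G_a and G_b with a ∈ G_a and b ∈ G_b, such that every vertex v in G_c has degree at least d_G(v) - 1 in G_c, for c ∈ {a, b}. -/

import Mathlib

def hypercube (n : ℕ) : SimpleGraph (Fin n → Bool) :=
  SimpleGraph.fromRel (fun x y => hammingDist x y = 1)

/-!
Choose a coordinate `i` with `a i ≠ b i`. Let `S` be the set of vertices reachable from `a` by
edges of `G` that keep coordinate `i`, let `B` be the component of `b` in `G - S`, and let `A` be
the rest of `G`. Both parts are closed under the edges keeping coordinate `i`, so a vertex only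
loses its unique neighbour across coordinate `i`. `B` is connected by construction, and `A` is
connected because `S` is and every other component of `G - S` is attached to `S`.
-/

open Relation

namespace SimpleGraph.Subgraph

variable {V : Type*} {H : SimpleGraph V} (G : H.Subgraph)

theorem reflTransGen_adj_of_coe_connected (hconn : G.coe.Connected) {u v : V}
    (hu : u ∈ G.verts) (hv : v ∈ G.verts) : ReflTransGen G.Adj u v :=
  ((reachable_iff_reflTransGen _ _).mp (hconn.preconnected ⟨u, hu⟩ ⟨v, hv⟩)).lift
    Subtype.val fun _ _ => id

theorem coe_connected_of_forall_reflTransGen {a : V} (ha : a ∈ G.verts)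
    (h : ∀ v ∈ G.verts, ReflTransGen G.Adj a v) : G.coe.Connected := by
  refine (connected_iff_exists_forall_reachable _).mpr ⟨⟨a, ha⟩, fun v => ?_⟩
  suffices ∀ w (hw : w ∈ G.verts), ReflTransGen G.Adj a w →
      G.coe.Reachable ⟨a, ha⟩ ⟨w, hw⟩ from this v v.2 (h v v.2)
  intro w hw haw
  induction haw with
  | refl => rfl
  | tail _ hxw ih => exact (ih (G.edge_vert hxw)).trans (Adj.reachable hxw.coe)

theorem coe_connected_induce_setOf_reflTransGen {r : V → V → Prop}
    (hr : ∀ ⦃x y⦄, r x y → G.Adj x y) (a : V) :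
    (G.induce {v | ReflTransGen r a v}).coe.Connected := by
  refine coe_connected_of_forall_reflTransGen _ ReflTransGen.refl fun v hv => ?_
  induction hv with
  | refl => rfl
  | tail hax hxy ih => exact ih.tail ⟨hax, hax.tail hxy, hr hxy⟩

theorem verts_subset_of_forall_adj_mem (hconn : G.coe.Connected) {C : Set V}
    (hC : ∀ ⦃x y⦄, G.Adj x y → x ∈ C → y ∈ C) {a : V} (ha : a ∈ G.verts)
    (haC : a ∈ C) : G.verts ⊆ C := by
  intro v hv
  have hav := G.reflTransGen_adj_of_coe_connected hconn ha hv
  clear hv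
  induction hav with
  | refl => exact haC
  | tail _ hxy ih => exact hC hxy ih

theorem mem_of_reflTransGen_induce_adj {T : Set V} {a v : V} (ha : a ∈ T)
    (h : ReflTransGen (G.induce T).Adj a v) : v ∈ T := by
  obtain rfl | ⟨x, -, hxv⟩ := h.cases_tail
  exacts [ha, hxv.2.1]

/-- If `G[S]` is connected and `B` is a union of components of `G - S`, then `G - B` is
connected. -/
theorem coe_connected_induce_verts_diff (hconn : G.coe.Connected) {S B : Set V}
    (hS : (G.induce S).coe.Connected) (hSG : S ⊆ G.verts) (hSB : Disjoint S B)
    (hB : ∀ ⦃x y⦄, G.Adj x y → x ∈ B → y ∉ S → y ∈ B) :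
    (G.induce (G.verts \ B)).coe.Connected := by
  obtain ⟨⟨a, haS⟩⟩ := hS.nonempty
  have hSA : S ⊆ G.verts \ B := fun x hx => ⟨hSG hx, hSB.notMem_of_mem_left hx⟩
  have haA := hSA haS
  set A' := {v | ReflTransGen (G.induce (G.verts \ B)).Adj a v}
  have hcover : G.verts ⊆ A' ∪ B := by
    refine G.verts_subset_of_forall_adj_mem hconn (fun x y hxy hx => ?_) haA.1 (.inl .refl)
    by_cases hyB : y ∈ B
    · exact .inr hyB
    have hyA : y ∈ G.verts \ B := ⟨G.edge_vert hxy.symm, hyB⟩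
    rcases hx with hxA' | hxB
    · exact .inl (hxA'.tail ⟨G.mem_of_reflTransGen_induce_adj haA hxA', hyA, hxy⟩)
    · have hyS : y ∈ S := by_contra fun hyS => hyB (hB hxy hxB hyS)
      exact .inl (ReflTransGen.mono (fun _ _ h => (induce_mono_right hSA).2 h) _ _
        ((G.induce S).reflTransGen_adj_of_coe_connected hS haS hyS))
  exact coe_connected_of_forall_reflTransGen _ haA fun v hv =>
    (hcover hv.1).resolve_right hv.2

variable {β : Type*}

def IsLevelClosed (f : V → β) (S : Set V) : Prop :=
  ∀ ⦃x y⦄, G.Adj x y → f x = f y → x ∈ S → y ∈ S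

variable {G} in
theorem IsLevelClosed.verts_diff {f : V → β} {S : Set V}
    (hS : G.IsLevelClosed f S) : G.IsLevelClosed f (G.verts \ S) :=
  fun _ _ hxy hf hx => ⟨G.edge_vert hxy.symm, fun hy => hx.2 (hS hxy.symm hf.symm hy)⟩

theorem exists_isLevelClosed_split (hconn : G.coe.Connected) (f : V → β) {a b : V}
    (ha : a ∈ G.verts) (hb : b ∈ G.verts) (hab : f a ≠ f b) :
    ∃ B ⊆ G.verts, a ∉ B ∧ b ∈ B ∧ G.IsLevelClosed f B ∧
      (G.induce (G.verts \ B)).coe.Connected ∧ (G.induce B).coe.Connected := by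
  set S := {v | ReflTransGen (fun x y => G.Adj x y ∧ f x = f y) a v}
  have hSG : S ⊆ G.verts := fun v hv => by
    obtain rfl | ⟨x, -, hxv⟩ := hv.cases_tail
    exacts [ha, G.edge_vert hxv.1.symm]
  have hfS : ∀ v ∈ S, f a = f v := fun v hv => by
    induction hv with
    | refl => rfl
    | tail _ hxy ih => exact ih.trans hxy.2
  have hS : G.IsLevelClosed f S := fun _ _ hxy hf hx => hx.tail ⟨hxy, hf⟩
  set B := {v | ReflTransGen (G.induce (G.verts \ S)).Adj b v}
  have hbS : b ∈ G.verts \ S := ⟨hb, fun h => hab (hfS b h)⟩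
  have hBS : B ⊆ G.verts \ S := fun _ => G.mem_of_reflTransGen_induce_adj hbS
  have hB : ∀ ⦃x y⦄, G.Adj x y → x ∈ B → y ∉ S → y ∈ B := fun _ _ hxy hx hy =>
    hx.tail ⟨hBS hx, ⟨G.edge_vert hxy.symm, hy⟩, hxy⟩
  refine ⟨B, fun v hv => (hBS hv).1, fun haB => (hBS haB).2 .refl, .refl,
    fun _ _ hxy hf hx => hB hxy hx fun hy => (hBS hx).2 (hS hxy.symm hf.symm hy), ?_,
    G.coe_connected_induce_setOf_reflTransGen (fun _ _ h => h.2.2) b⟩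
  exact G.coe_connected_induce_verts_diff hconn
    (G.coe_connected_induce_setOf_reflTransGen (fun _ _ h => h.1) a) hSG
    (Set.disjoint_left.mpr fun _ hvS hvB => (hBS hvB).2 hvS) hB

theorem ncard_neighborSet_sub_one_le [Finite V] {f : V → β} {A : Set V}
    (hA : G.IsLevelClosed f A) {v : V} (hv : v ∈ A)
    (hH : {w | H.Adj v w ∧ f v ≠ f w}.Subsingleton) :
    (G.neighborSet v).ncard - 1 ≤ ((G.induce A).neighborSet v).ncard := by
  set X := {w | H.Adj v w ∧ f v ≠ f w}
  have hsub : G.neighborSet v ⊆ (G.induce A).neighborSet v ∪ X := by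
    intro w hw
    by_cases hf : f v = f w
    · exact .inl ⟨hv, hA hw hf hv, hw⟩
    · exact .inr ⟨G.adj_sub hw, hf⟩
  have hle := calc
    (G.neighborSet v).ncard ≤ ((G.induce A).neighborSet v ∪ X).ncard := Set.ncard_le_ncard hsub
    _ ≤ ((G.induce A).neighborSet v).ncard + X.ncard := Set.ncard_union_le _ _
    _ ≤ ((G.induce A).neighborSet v).ncard + 1 := by
      gcongr
      exact Set.ncard_le_one_iff_subsingleton.mpr hH
  omega

end SimpleGraph.Subgraph

theorem apply_eq_of_hypercube_adj_of_apply_ne {n : ℕ} {v w : Fin n → Bool}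
    (h : (hypercube n).Adj v w) {i j : Fin n} (hi : v i ≠ w i) (hj : j ≠ i) : v j = w j := by
  have hd : hammingDist v w = 1 := by
    obtain ⟨-, hd | hd⟩ := (SimpleGraph.fromRel_adj _ _ _).mp h
    exacts [hd, hammingDist_comm w v ▸ hd]
  by_contra hne
  exact hj (Finset.card_le_one.mp hd.le j (by simpa using hne) i (by simpa using hi))

theorem setOf_hypercube_adj_apply_ne_subsingleton (n : ℕ) (v : Fin n → Bool) (i : Fin n) :
    {w | (hypercube n).Adj v w ∧ v i ≠ w i}.Subsingleton := by
  rintro w ⟨hw, hwi⟩ u ⟨hu, hui⟩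
  funext j
  by_cases hj : j = i
  · subst hj
    revert hwi hui
    cases v j <;> cases w j <;> cases u j <;> simp
  · rw [← apply_eq_of_hypercube_adj_of_apply_ne hw hwi hj,
      apply_eq_of_hypercube_adj_of_apply_ne hu hui hj]

/-- Splitting lemma: a connected subgraph `G` of `Q_n` with distinct vertices `a, b`
can be partitioned into connected induced subgraphs `G_a ∋ a` and `G_b ∋ b` in which
every vertex loses at most one neighbour. -/
theorem hypercube_splitting (n : ℕ) (G : (hypercube n).Subgraph)
    (hconn : G.coe.Connected)
    (a b : Fin n → Bool) (ha : a ∈ G.verts) (hb : b ∈ G.verts) (hab : a ≠ b) :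
    ∃ A B : Set (Fin n → Bool),
      A ∪ B = G.verts ∧ Disjoint A B ∧ a ∈ A ∧ b ∈ B ∧
      (G.induce A).coe.Connected ∧ (G.induce B).coe.Connected ∧
      (∀ v ∈ A, (G.neighborSet v).ncard - 1 ≤ ((G.induce A).neighborSet v).ncard) ∧
      (∀ v ∈ B, (G.neighborSet v).ncard - 1 ≤ ((G.induce B).neighborSet v).ncard) := by
  obtain ⟨i, hi⟩ := Function.ne_iff.mp hab
  obtain ⟨B, hBG, haB, hbB, hB, hAconn, hBconn⟩ :=
    G.exists_isLevelClosed_split hconn (· i) ha hb hi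
  have hflip := fun v => setOf_hypercube_adj_apply_ne_subsingleton n v i
  exact ⟨G.verts \ B, B, Set.sdiff_union_of_subset hBG, Set.disjoint_sdiff_left, ⟨ha, haB⟩,
    hbB, hAconn, hBconn, fun v hv => G.ncard_neighborSet_sub_one_le hB.verts_diff hv (hflip v),
    fun v hv => G.ncard_neighborSet_sub_one_le hB hv (hflip v)⟩
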